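/- arXiv:2109.06670 — 7 statements merged into one kernel-verified Lean document; each statement's English description precedes it below -/
import Mathlib

section
/- Let I be a type, A, B : I → Type, and f a family of functions f i : A i → B i. If a type X is f-local, then X is tot(f)-local. -/
universe u v v' w

/-- `X` is local with respect to a single map `g : A' → B'` if precomposition with `g`
is a bijection `(B' → X) → (A' → X)`. -/
def IsLocalAt {A' : Type*} {B' : Type*} (g : A' → B') (X : Type u) : Prop :=
  Function.Bijective (fun h : B' → X => h ∘ g)

/-- `X` is local with respect to a family of maps `f i : A i → B i` if precomposition
with each `f i` is a bijection `(B i → X) → (A i → X)`. -/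
def IsLocal {I : Type w} {A B : I → Type v} (f : ∀ i, A i → B i) (X : Type u) : Prop :=
  ∀ i, IsLocalAt (f i) X

/-- The total map `tot f : (Σ i, A i) → (Σ i, B i)` of a family `f i : A i → B i`. -/
def tot {I : Type w} {A B : I → Type v} (f : ∀ i, A i → B i) :
    (Σ i, A i) → Σ i, B i :=
  fun x => ⟨x.1, f x.1 x.2⟩

/-- Every `f`-local type is `tot f`-local. -/
theorem isLocalAt_tot_of_isLocal {I : Type w} {A B : I → Type v} (f : ∀ i, A i → B i)
    (X : Type u) (hX : IsLocal f X) : IsLocalAt (tot f) X := by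
  constructor
  · intro h₁ h₂ he
    funext ⟨i, b⟩
    have : (fun b => h₁ ⟨i, b⟩) = fun b => h₂ ⟨i, b⟩ := by
      apply (hX i).1
      funext a
      exact congrFun he ⟨i, a⟩
    exact congrFun this b
  · intro k
    choose g hg using fun i => (hX i).2 (fun a => k ⟨i, a⟩)
    refine ⟨fun b => g b.1 b.2, ?_⟩
    funext ⟨i, a⟩
    exact congrFun (hg i) a
end

section
/- Let I be a type with decidable equality, A, B : I → Type, and f a family of functions f i : A i → B i. If X is a nonempty type, then X is f-local if and only if X is tot(f)-local. -/
universe u v v' w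

/-- For a decidably-indexed family and a nonempty type, being `f`-local is equivalent to
being `tot f`-local. -/
theorem isLocal_iff_isLocalAt_tot_of_nonempty {I : Type w} [DecidableEq I]
    {A B : I → Type v} (f : ∀ i, A i → B i) (X : Type u) (hX : Nonempty X) :
    IsLocal f X ↔ IsLocalAt (tot f) X := by
  obtain ⟨x₀⟩ := hX
  constructor
  · intro hf
    constructor
    · intro H₁ H₂ hH
      funext ⟨i, b⟩
      have : (fun b => H₁ ⟨i, b⟩) = (fun b => H₂ ⟨i, b⟩) := by
        apply (hf i).1
        funext a
        exact congrFun hH ⟨i, a⟩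
      exact congrFun this b
    · intro G
      choose h hh using fun i => (hf i).2 (fun a => G ⟨i, a⟩)
      refine ⟨fun b => h b.1 b.2, ?_⟩
      funext ⟨i, a⟩
      exact congrFun (hh i) a
  · intro ht i
    constructor
    · intro h₁ h₂ hh
      set H₁ : (Σ j, B j) → X := fun b =>
        if e : b.1 = i then h₁ (e ▸ b.2) else x₀ with hH₁
      set H₂ : (Σ j, B j) → X := fun b =>
        if e : b.1 = i then h₂ (e ▸ b.2) else x₀ with hH₂
      have : H₁ = H₂ := by
        apply ht.1
        funext ⟨j, a⟩
        by_cases e : j = i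
        · subst e
          simp only [hH₁, hH₂, tot, Function.comp]
          exact congrFun hh a
        · simp [hH₁, hH₂, tot, Function.comp, e]
      funext b
      have := congrFun this ⟨i, b⟩
      simpa [hH₁, hH₂] using this
    · intro g
      obtain ⟨H, hH⟩ := ht.2 (fun a : Σ j, A j =>
        if e : a.1 = i then g (e ▸ a.2) else x₀)
      refine ⟨fun b => H ⟨i, b⟩, ?_⟩
      funext a
      have := congrFun hH ⟨i, a⟩
      simpa [tot] using this
end

section
/- Let I be a type, A, B : I → Type, and f a family of functions f i : A i → B i such that the empty type is f-local (equivalently, for every i : I, A i is nonempty if and only if B i is nonempty). Then for every type X, X is f-local if and only if X is tot(f)-local. -/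
universe u v v' w

/-- If the empty type is `f`-local, then a type is `f`-local if and only if it is
`tot f`-local. -/
theorem isLocal_iff_isLocalAt_tot_of_empty_local {I : Type w}
    {A B : I → Type v} (f : ∀ i, A i → B i) (hE : IsLocal f Empty) (X : Type u) :
    IsLocal f X ↔ IsLocalAt (tot f) X := by
  classical
  constructor
  · intro hloc
    constructor
    · intro H1 H2 heq
      funext ⟨i, b⟩
      have h : (fun b => H1 ⟨i, b⟩) = (fun b => H2 ⟨i, b⟩) := (hloc i).injective
        (show _ ∘ f i = _ ∘ f i from funext fun a => congrFun heq ⟨i, a⟩)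
      exact congrFun h b
    · intro G
      choose h hh using fun i => (hloc i).surjective (fun a => G ⟨i, a⟩)
      refine ⟨fun p => h p.1 p.2, ?_⟩
      funext ⟨i, a⟩
      exact congrFun (hh i) a
  · intro htot i
    constructor
    · intro h1 h2 heq
      by_cases hX : Nonempty X
      · obtain ⟨x0⟩ := hX
        have key : (fun p : Σ j, B j => if hji : p.1 = i then h1 (hji ▸ p.2) else x0) =
            (fun p : Σ j, B j => if hji : p.1 = i then h2 (hji ▸ p.2) else x0) := by
          apply htot.injective
          funext ⟨j, a⟩
          by_cases hji : j = i
          · subst hji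
            simpa [tot, Function.comp] using congrFun heq a
          · simp [tot, Function.comp, hji]
        funext b
        have := congrFun key ⟨i, b⟩
        simpa using this
      · funext b
        exact absurd ⟨h1 b⟩ hX
    · intro g
      by_cases hX : Nonempty X
      · obtain ⟨x0⟩ := hX
        obtain ⟨H, hH⟩ := htot.surjective
          (fun p : Σ j, A j => if hji : p.1 = i then g (hji ▸ p.2) else x0)
        refine ⟨fun b => H ⟨i, b⟩, ?_⟩
        funext a
        have := congrFun hH ⟨i, a⟩
        simpa [tot] using this
      · -- X is empty, so A i is empty, hence B i is empty by hE
        have hA : A i → Empty := fun a => absurd ⟨g a⟩ hX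
        obtain ⟨q, _⟩ := (hE i).surjective hA
        exact ⟨fun b => (q b).elim, funext fun a => (q (f i a)).elim⟩
end

section
/- Let I be a type, A, B : I → Type, and f a family of functions f i : A i → B i such that the empty type is f-local. Then there exist types A', B' and a single function g : A' → B' such that for every type X, X is f-local if and only if X is g-local (i.e., precomposition with g is a bijection (B' → X) → (A' → X)). -/
universe u v v' w

/-- If the empty type is `f`-local, then the `f`-local types can be presented as the types
local with respect to a single map. -/
theorem exists_single_map_of_empty_local {I : Type w}
    {A B : I → Type v} (f : ∀ i, A i → B i) (hE : IsLocal f Empty) :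
    ∃ (A' B' : Type (max w v)) (g : A' → B'),
      ∀ X : Type u, IsLocal f X ↔ IsLocalAt g X := by
  refine ⟨Σ i, A i, Σ i, B i, tot f, fun X => ?_⟩
  constructor
  · intro hf
    constructor
    · intro H₁ H₂ h
      funext ⟨i, b⟩
      have key : (fun b => H₁ ⟨i, b⟩) = fun b => H₂ ⟨i, b⟩ := by
        apply (hf i).1
        funext a
        exact congrFun h ⟨i, a⟩
      exact congrFun key b
    · intro K
      choose h hh using fun i => (hf i).2 (fun a => K ⟨i, a⟩)
      exact ⟨fun x => h x.1 x.2, funext fun ⟨i, a⟩ => congrFun (hh i) a⟩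
  · intro hg i
    by_cases hX : Nonempty X
    · classical
      obtain ⟨x0⟩ := hX
      have ext : (B i → X) → (Σ j, B j) → X :=
        fun h x => if e : x.1 = i then h (e ▸ x.2) else x0
      constructor
      · intro h₁ h₂ h
        have hcomp : ∀ h' : B i → X,
            (fun x : Σ j, B j => if e : x.1 = i then h' (e ▸ x.2) else x0) ∘ tot f
            = fun x : Σ j, A j => if e : x.1 = i then h' (e ▸ f x.1 x.2) else x0 := by
          intro h'
          funext ⟨j, a⟩
          simp only [Function.comp, tot]
          rfl
        have key : (fun x : Σ j, B j => if e : x.1 = i then h₁ (e ▸ x.2) else x0)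
            = fun x : Σ j, B j => if e : x.1 = i then h₂ (e ▸ x.2) else x0 := by
          apply hg.1
          show _ ∘ tot f = _ ∘ tot f
          rw [hcomp, hcomp]
          funext ⟨j, a⟩
          by_cases e : j = i
          · subst e
            simpa using congrFun h a
          · simp [e]
        funext b
        have := congrFun key ⟨i, b⟩
        simpa using this
      · intro k
        obtain ⟨H, hH⟩ := hg.2
          (fun x : Σ j, A j => if e : x.1 = i then k (e ▸ x.2) else x0)
        refine ⟨fun b => H ⟨i, b⟩, funext fun a => ?_⟩
        have := congrFun hH ⟨i, a⟩
        simpa [tot] using this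
    · constructor
      · intro h₁ h₂ _
        funext b
        exact absurd ⟨h₁ b⟩ hX
      · intro k
        obtain ⟨hB, _⟩ := (hE i).2 (fun a => absurd ⟨k a⟩ hX)
        exact ⟨fun b => (hB b).elim, funext fun a => absurd ⟨k a⟩ hX⟩
end

section
/- Let I : Type w be a type (in an arbitrary universe), A, B : I → Type v families of types (in an arbitrary universe), and f a family of surjective functions f i : A i → B i. Fix a universe u. Then the f-local types in Type u form a reflective subcategory: for every X : Type u there exist an f-local type L X : Type u and a map η : X → L X such that for every f-local type Z : Type u and every g : X → Z there is a unique h : L X → Z with h ∘ η = g. -/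
universe u v w

/-- For any family of surjections, indexed by a possibly large type and with possibly
large domains and codomains, the `f`-local types in `Type u` form a reflective
subcategory: every `X : Type u` has a localization `LX : Type u`. -/
theorem exists_localization_of_surjective {I : Type w} {A B : I → Type v}
    (f : ∀ i, A i → B i) (hf : ∀ i, Function.Surjective (f i)) (X : Type u) :
    ∃ (LX : Type u) (η : X → LX), IsLocal f LX ∧
      ∀ Z : Type u, IsLocal f Z → ∀ g : X → Z, ∃! h : LX → Z, h ∘ η = g := by
  by_cases hinj : ∀ i, Function.Injective (f i)
  · -- every `f i` is a bijection, so every type is local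
    refine ⟨X, id, ?_, ?_⟩
    · intro i
      constructor
      · intro h₁ h₂ e
        funext b
        obtain ⟨a, rfl⟩ := hf i b
        exact congrFun e a
      · intro k
        refine ⟨fun b => k (Function.surjInv (hf i) b), ?_⟩
        funext a
        have : f i (Function.surjInv (hf i) (f i a)) = f i a :=
          Function.surjInv_eq (hf i) (f i a)
        simp only [Function.comp_apply]
        exact congrArg k (hinj i this)
    · intro Z _ g
      exact ⟨g, rfl, fun h e => e⟩
  · -- some `f i₀` identifies two distinct points, so local = subsingleton
    push_neg at hinj
    obtain ⟨i₀, hni⟩ := hinj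
    obtain ⟨a, a', hfe, hne⟩ := Function.not_injective_iff.mp hni
    have key : ∀ Z : Type u, IsLocal f Z → ∀ x y : Z, x = y := by
      intro Z hZ x y
      classical
      obtain ⟨h, hh⟩ := (hZ i₀).2 (fun a'' => if a'' = a then x else y)
      have h1 : h (f i₀ a) = x := by simpa using congrFun hh a
      have h2 : h (f i₀ a') = y := by simpa [Ne.symm hne] using congrFun hh a'
      rw [← h1, hfe, h2]
    refine ⟨ULift (PLift (Nonempty X)), fun x => ⟨⟨⟨x⟩⟩⟩, ?_, ?_⟩
    · intro i
      constructor
      · intro h₁ h₂ _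
        funext b
        exact Subsingleton.elim _ _
      · intro k
        refine ⟨fun b => k (Function.surjInv (hf i) b), ?_⟩
        funext a
        exact Subsingleton.elim _ _
    · intro Z hZ g
      refine ⟨fun p => g p.down.down.some, funext fun x => key Z hZ _ _,
        fun h' _ => funext fun p => key Z hZ _ _⟩
end

section
/- Let I : Type w be a type (in an arbitrary universe), A, B : I → Type v families of types (in an arbitrary universe), and f a family of surjective functions f i : A i → B i. Fix a universe u. Let R be the class of functions r : X → Y between types in Type u such that r is (uniquely) right orthogonal to every f i, i.e., for every i and every commuting square u₀ : A i → X, v₀ : B i → Y with r ∘ u₀ = v₀ ∘ f i there is a unique d : B i → X with d ∘ f i = u₀ and r ∘ d = v₀. Let L be the class of functions between types in Type u having the unique left lifting property against every map of R. Then (L, R) is an orthogonal factorization system on Type u: every function g : X → Y between types in Type u factors as g = r ∘ l with l ∈ L and r ∈ R, and R is exactly the class of maps in Type u having the unique right lifting property against every map of L. -/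
universe u v w

/-- `l : A' → B'` and `r : X → Y` are (uniquely) orthogonal: every commuting square
`r ∘ u₀ = v₀ ∘ l` has a unique diagonal filler `d : B' → X`. -/
def UniqueLift {A' : Type*} {B' : Type*} {X : Type*} {Y : Type*}
    (l : A' → B') (r : X → Y) : Prop :=
  ∀ (u₀ : A' → X) (v₀ : B' → Y), r ∘ u₀ = v₀ ∘ l →
    ∃! d : B' → X, d ∘ l = u₀ ∧ r ∘ d = v₀

/-- The right class determined by the family `f`: maps in `Type u` that are
(uniquely) right orthogonal to every `f i`. -/
def RClass {I : Type w} {A B : I → Type v} (f : ∀ i, A i → B i)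
    (X Y : Type u) (r : X → Y) : Prop :=
  ∀ i, UniqueLift (f i) r

/-- The left class determined by the family `f`: maps in `Type u` having the unique
left lifting property against every map of the right class. -/
def LClass {I : Type w} {A B : I → Type v} (f : ∀ i, A i → B i)
    (X' Y' : Type u) (l : X' → Y') : Prop :=
  ∀ (X Y : Type u) (r : X → Y), RClass f X Y r → UniqueLift l r

/-- A surjection is uniquely left orthogonal to an injection. -/
lemma uniqueLift_of_surj_inj {A' B' X Y : Type*} {l : A' → B'} {r : X → Y}
    (hl : Function.Surjective l) (hr : Function.Injective r) : UniqueLift l r := by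
  intro u₀ v₀ hsq
  choose s hs using hl
  have key : ∀ a, u₀ (s (l a)) = u₀ a := by
    intro a
    apply hr
    have h1 := congrFun hsq (s (l a))
    have h2 := congrFun hsq a
    simp only [Function.comp] at h1 h2
    rw [h1, h2, hs]
  refine ⟨fun b => u₀ (s b), ⟨funext fun a => key a, funext fun b => ?_⟩, ?_⟩
  · have := congrFun hsq (s b)
    simp only [Function.comp] at this ⊢
    rw [this, hs]
  · rintro d ⟨hd1, _⟩
    funext b
    have := congrFun hd1 (s b)
    simp only [Function.comp] at this
    rw [← hs b, this, key, ← this, hs]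

/-- A bijection is uniquely left orthogonal to anything. -/
lemma uniqueLift_of_bij {A' B' X Y : Type*} {l : A' → B'} (hl : Function.Bijective l)
    (r : X → Y) : UniqueLift l r := by
  intro u₀ v₀ hsq
  obtain ⟨s, hsl, hls⟩ := Function.bijective_iff_has_inverse.mp hl
  refine ⟨fun b => u₀ (s b), ⟨funext fun a => by simp [hsl a], funext fun b => ?_⟩, ?_⟩
  · have := congrFun hsq (s b)
    simp only [Function.comp] at this ⊢
    rw [this, hls]
  · rintro d ⟨hd1, _⟩
    funext b
    have := congrFun hd1 (s b)
    simp only [Function.comp] at this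
    rw [← this, hls]

lemma R_of_inj {I : Type w} {A B : I → Type v} {f : ∀ i, A i → B i}
    (hf : ∀ i, Function.Surjective (f i)) {X Y : Type u} {r : X → Y}
    (hr : Function.Injective r) : RClass f X Y r :=
  fun i => uniqueLift_of_surj_inj (hf i) hr

/-- If some `f i₀` glues two points, then every map in the right class is injective. -/
lemma inj_of_R {I : Type w} {A B : I → Type v} {f : ∀ i, A i → B i}
    (hf : ∀ i, Function.Surjective (f i))
    {i₀ : I} {a a' : A i₀} (hne : a ≠ a') (heq : f i₀ a = f i₀ a')
    {X Y : Type u} {r : X → Y} (hr : RClass f X Y r) : Function.Injective r := by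
  intro x x' hxx'
  classical
  set u₀ : A i₀ → X := fun c => if c = a then x else x' with hu₀
  choose s hs using hf i₀
  set v₀ : B i₀ → Y := fun b => r (u₀ (s b)) with hv₀
  have hconst : ∀ c, r (u₀ c) = r x' := by
    intro c
    by_cases hc : c = a <;> simp [hu₀, hc, hxx']
  have hsq : r ∘ u₀ = v₀ ∘ f i₀ := by
    funext c
    simp only [Function.comp, hv₀, hconst]
  obtain ⟨d, ⟨hd1, _⟩, _⟩ := hr i₀ u₀ v₀ hsq
  have h1 := congrFun hd1 a
  have h2 := congrFun hd1 a'
  simp only [Function.comp, heq] at h1 h2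
  have h3 := h1.symm.trans h2
  simpa [hu₀, Ne.symm hne] using h3

/-- For any family of surjections `f i : A i → B i` (with no smallness hypotheses on
`I`, `A i`, `B i`), the pair `(LClass f, RClass f)` is an orthogonal factorization
system on `Type u`: every map factors as a map in the left class followed by a map in
the right class, and the right class consists exactly of the maps having the unique
right lifting property against the left class. -/
theorem orthogonal_factorization_system_of_surjective {I : Type w} {A B : I → Type v}
    (f : ∀ i, A i → B i) (hf : ∀ i, Function.Surjective (f i)) :
    (∀ (X Y : Type u) (g : X → Y),
      ∃ (W : Type u) (l : X → W) (r : W → Y),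
        LClass f X W l ∧ RClass f W Y r ∧ r ∘ l = g) ∧
    (∀ (X Y : Type u) (r : X → Y),
      RClass f X Y r ↔
        ∀ (X' Y' : Type u) (l : X' → Y'), LClass f X' Y' l → UniqueLift l r) := by
  by_cases hcase : ∀ i, Function.Injective (f i)
  · -- every `f i` is a bijection: `RClass` is everything, `id` is in `LClass`.
    have hR : ∀ (X Y : Type u) (r : X → Y), RClass f X Y r := by
      intro X Y r i
      exact uniqueLift_of_bij ⟨hcase i, hf i⟩ r
    constructor
    · intro X Y g
      refine ⟨X, id, g, ?_, hR X Y g, rfl⟩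
      intro W Z r hr
      exact uniqueLift_of_bij Function.bijective_id r
    · intro X Y r
      constructor
      · intro hr X' Y' l hl
        exact hl X Y r hr
      · intro _
        exact hR X Y r
  · -- some `f i₀` identifies two points: `RClass` = injections, surjections ∈ `LClass`.
    push_neg at hcase
    obtain ⟨i₀, hni⟩ := hcase
    rw [Function.not_injective_iff] at hni
    obtain ⟨a, a', heq, hne⟩ := hni
    have hL : ∀ (X' Y' : Type u) (l : X' → Y'), Function.Surjective l →
        LClass f X' Y' l := by
      intro X' Y' l hl X Y r hr
      exact uniqueLift_of_surj_inj hl (inj_of_R hf hne heq hr)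
    constructor
    · intro X Y g
      refine ⟨Set.range g, Set.rangeFactorization g, Subtype.val,
        hL _ _ _ Set.rangeFactorization_surjective, R_of_inj hf Subtype.val_injective, rfl⟩
    · intro X Y r
      constructor
      · intro hr X' Y' l hl
        exact hl X Y r hr
      · intro h
        -- apply the hypothesis to the surjection `ULift Bool → PUnit` to get injectivity
        have hlift := h (ULift.{u} Bool) PUnit (fun _ => PUnit.unit)
          (hL _ _ _ (fun _ => ⟨⟨true⟩, rfl⟩))
        apply R_of_inj hf
        intro x x' hxx'
        classical
        obtain ⟨d, ⟨hd1, _⟩, _⟩ := hlift (fun b => if b.down then x else x')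
          (fun _ => r x) (by funext b; by_cases hb : b.down <;> simp [hb, hxx'])
        have h1 := congrFun hd1 ⟨true⟩
        have h2 := congrFun hd1 ⟨false⟩
        simp only [Function.comp] at h1 h2
        have h3 := h1.symm.trans h2
        simpa using h3
end

section
/- Let u and v be universes, and let P : Type (max u v) → Prop be a predicate invariant under equivalence of types. Suppose given L : Type (max u v) → Type (max u v) and maps η X : X → L X for each X such that: (1) P (L X) holds for every X; and (2) for every X and every Z with P Z, the precomposition map (L X → Z) → (X → Z) sending h to h ∘ η X is a bijection. Call a type Z : Type u local if P (ULift Z) holds. Assume that for every X : Type u, the type L (ULift X) is u-small (Small.{u}). Then the local types in Type u form a reflective subcategory of Type u: for every X : Type u there exist a local type L' X : Type u and a map η' : X → L' X such that for every local Z : Type u and every g : X → Z there is a unique h : L' X → Z with h ∘ η' = g. -/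
universe u v

/-- A reflective subuniverse of the larger universe `Type (max u v)` whose reflections
of types coming from `Type u` are `u`-small restricts to a reflective subcategory of
`Type u`. -/
theorem restricted_localization
    (P : Type (max u v) → Prop)
    (hP : ∀ X Y : Type (max u v), X ≃ Y → (P X ↔ P Y))
    (L : Type (max u v) → Type (max u v))
    (η : ∀ X : Type (max u v), X → L X)
    (h1 : ∀ X : Type (max u v), P (L X))
    (h2 : ∀ (X Z : Type (max u v)), P Z →
      Function.Bijective (fun h : L X → Z => h ∘ η X))
    (hsmall : ∀ X : Type u, Small.{u} (L (ULift.{v} X))) :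
    ∀ X : Type u, ∃ (LX : Type u) (η' : X → LX), P (ULift.{v} LX) ∧
      ∀ Z : Type u, P (ULift.{v} Z) → ∀ g : X → Z, ∃! h : LX → Z, h ∘ η' = g := by
  intro X
  haveI := hsmall X
  let e : L (ULift.{v} X) ≃ Shrink.{u} (L (ULift.{v} X)) := equivShrink _
  refine ⟨Shrink.{u} (L (ULift.{v} X)), fun x => e (η _ (ULift.up x)), ?_, ?_⟩
  · exact (hP _ _ (Equiv.ulift.trans e.symm)).mpr (h1 _)
  · intro Z hZ g
    obtain ⟨k, hk⟩ := (h2 (ULift.{v} X) (ULift.{v} Z) hZ).surjective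
      (ULift.up ∘ g ∘ ULift.down)
    refine ⟨ULift.down ∘ k ∘ e.symm, ?_, ?_⟩
    · funext x
      simpa using congrArg ULift.down (congrFun hk (ULift.up x))
    · intro h hh
      have : (ULift.up ∘ h ∘ e : L (ULift.{v} X) → ULift.{v} Z) = k := by
        apply (h2 (ULift.{v} X) (ULift.{v} Z) hZ).injective
        rw [hk]
        funext x
        simpa using congrFun hh x.down
      funext s
      have := congrFun this (e.symm s)
      simp at this
      simp only [Function.comp_apply]; rw [← this]
end
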